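/- arXiv:1205.3599 — 8 statements merged into one kernel-verified Lean document; each statement's English description precedes it below -/
import Mathlib

section
/- For monomial ideals $I, J \subseteq S$, the expansion operator satisfies $(IJ)^* = I^* J^*$. -/
open MvPolynomial

/-- The monomial ideal of `S = K[x_1,…,x_n]` generated by the monomials `x^a`, `a ∈ A`. -/
noncomputable def monIdeal (K : Type*) [Field K] {n : ℕ} (A : Set (Fin n → ℕ)) :
    Ideal (MvPolynomial (Fin n) K) :=
  Ideal.span ((fun a => ∏ j, (X j : MvPolynomial (Fin n) K) ^ a j) '' A)

/-- The expansion `I^* = ∑_{a ∈ A} P_1^{a(1)} ⋯ P_n^{a(n)} ⊆ S^*` of the monomial ideal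
generated by the monomials `x^a`, `a ∈ A`, with respect to the tuple `(i_1,…,i_n)`;
here `P_j = (x_{j1},…,x_{j i_j})`. -/
noncomputable def expIdeal (K : Type*) [Field K] {n : ℕ} (iv : Fin n → ℕ)
    (A : Set (Fin n → ℕ)) : Ideal (MvPolynomial ((j : Fin n) × Fin (iv j)) K) :=
  ⨆ a ∈ A, ∏ j, (Ideal.span (Set.range fun k : Fin (iv j) =>
      (X ⟨j, k⟩ : MvPolynomial ((j : Fin n) × Fin (iv j)) K))) ^ a j

/-- The `K`-algebra homomorphism `π : S^* → S`, `x_{jk} ↦ x_j`. -/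
noncomputable def piHom (K : Type*) [Field K] {n : ℕ} (iv : Fin n → ℕ) :
    MvPolynomial ((j : Fin n) × Fin (iv j)) K →ₐ[K] MvPolynomial (Fin n) K :=
  aeval fun p => X p.1

theorem Finset.prod_pow_add {ι M : Type*} [Fintype ι] [CommMonoid M] (x : ι → M)
    (a b : ι → ℕ) : ∏ j, x j ^ (a + b) j = (∏ j, x j ^ a j) * ∏ j, x j ^ b j := by
  simp only [Pi.add_apply, pow_add, Finset.prod_mul_distrib]

theorem Ideal.biSup_image2_add_eq_mul {R M : Type*} [CommSemiring R] [Add M]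
    (f : M → Ideal R) (hf : ∀ a b, f (a + b) = f a * f b) (A B : Set M) :
    ⨆ c ∈ Set.image2 (· + ·) A B, f c = (⨆ a ∈ A, f a) * ⨆ b ∈ B, f b := by
  simp only [iSup_image2, hf, Submodule.iSup_mul, Submodule.mul_iSup]
  exact iSup₂_comm _

/-- The product `IJ` is the monomial ideal generated by the monomials `x^(a+b)` with `x^a` a
generator of `I` and `x^b` a generator of `J`. -/
theorem expIdeal_mul_general (K : Type*) [Field K] {n : ℕ} (iv : Fin n → ℕ)
    (A B : Set (Fin n → ℕ)) :
    expIdeal K iv (Set.image2 (· + ·) A B) = expIdeal K iv A * expIdeal K iv B :=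
  Ideal.biSup_image2_add_eq_mul _ (Finset.prod_pow_add _) A B

/-- Lemma 1.1(iii): `(IJ)^* = I^* J^*`; the product `IJ` is the monomial ideal generated by
the monomials `x^(a+b)` with `x^a` a generator of `I` and `x^b` a generator of `J`. -/
theorem expIdeal_mul (K : Type*) [Field K] {n : ℕ} (iv : Fin n → ℕ)
    (hiv : ∀ j, 0 < iv j) (A B : Set (Fin n → ℕ)) :
    expIdeal K iv (Set.image2 (· + ·) A B) = expIdeal K iv A * expIdeal K iv B :=
  expIdeal_mul_general K iv A B
end

section
/- For monomial ideals $I, J \subseteq S$, the expansion operator satisfies $(I \cap J)^* = I^* \cap J^*$. -/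
open MvPolynomial

/-!
A polynomial of `S^*` lies in `P_1^{a_1} ⋯ P_n^{a_n}` as soon as each of its monomials `x^e` has
block degree `(∑_k e_{1k}, …, ∑_k e_{nk}) ≥ a`, and conversely. Hence `I^*` is the monomial
ideal of those `x^e` whose block degree lies in the upper closure of the exponents of `I`, while a
monomial `x^b` lies in `I` iff `b` itself lies in that upper closure. So `I ∩ J` has as upper
closure the intersection of those of `I` and `J`, and `(I ∩ J)^* = I^* ∩ J^*` follows monomial
by monomial.
-/

namespace MvPolynomial

variable {R σ : Type*} [CommSemiring R]

lemma monomial_one_eq_prod_X_pow [Fintype σ] (e : σ →₀ ℕ) :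
    monomial e (1 : R) = ∏ j, X j ^ e j := by
  rw [← prod_X_pow_eq_monomial, ← Finsupp.prod, Finsupp.prod_fintype _ _ fun _ => pow_zero _]

lemma monomial_mem_span_monomial_image_iff [Nontrivial R] {s : Set (σ →₀ ℕ)} {b : σ →₀ ℕ} :
    monomial b (1 : R) ∈ Ideal.span ((monomial · 1) '' s) ↔ b ∈ upperClosure s := by
  classical
  simp [mem_ideal_span_monomial_image, support_monomial, mem_upperClosure]

lemma mem_restrictSupportIdeal {s : Set (σ →₀ ℕ)} (hs : IsUpperSet s) {p : MvPolynomial σ R} :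
    p ∈ restrictSupportIdeal R s hs ↔ ↑p.support ⊆ s :=
  Iff.rfl

lemma restrictSupportIdeal_le {s : Set (σ →₀ ℕ)} (hs : IsUpperSet s)
    {I : Ideal (MvPolynomial σ R)} (h : ∀ e ∈ s, monomial e 1 ∈ I) :
    restrictSupportIdeal R s hs ≤ I := by
  intro p (hp : p ∈ restrictSupport R s)
  rw [restrictSupport_eq_span] at hp
  exact (Submodule.span_le (p := I.restrictScalars R)).2 (Set.image_subset_iff.2 h) hp

end MvPolynomial

section Blocks

variable (R : Type*) [CommSemiring R] {ι : Type*} {κ : ι → Type*} [∀ i, Fintype (κ i)]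

def blockDeg (e : (Σ i, κ i) →₀ ℕ) (i : ι) : ℕ := ∑ k, e ⟨i, k⟩

noncomputable def blockIdeal (κ : ι → Type*) (i : ι) : Ideal (MvPolynomial (Σ i, κ i) R) :=
  Ideal.span (Set.range fun k : κ i => X ⟨i, k⟩)

variable {R}

lemma blockDeg_add (e e' : (Σ i, κ i) →₀ ℕ) : blockDeg (e + e') = blockDeg e + blockDeg e' := by
  funext i
  simp [blockDeg, Finset.sum_add_distrib]

lemma blockDeg_mono : Monotone (blockDeg (κ := κ)) :=
  fun _ _ h i => Finset.sum_le_sum fun k _ => h ⟨i, k⟩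

lemma one_le_blockDeg_of_mem_blockIdeal {i : ι} {p : MvPolynomial (Σ i, κ i) R}
    (hp : p ∈ blockIdeal R κ i) : ∀ e ∈ p.support, 1 ≤ blockDeg e i := by
  rw [blockIdeal, Set.range_comp' X, mem_ideal_span_X_image] at hp
  intro e he
  obtain ⟨_, ⟨k, rfl⟩, hk⟩ := hp e he
  exact (Nat.one_le_iff_ne_zero.2 hk).trans
    (Finset.single_le_sum (f := fun k => e ⟨i, k⟩) (fun _ _ => Nat.zero_le _) (Finset.mem_univ k))

lemma le_blockDeg_of_mem_pow_blockIdeal {i : ι} {m : ℕ} {p : MvPolynomial (Σ i, κ i) R}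
    (hp : p ∈ blockIdeal R κ i ^ m) : ∀ e ∈ p.support, m ≤ blockDeg e i := by
  classical
  induction m generalizing p with
  | zero => simp
  | succ m ih =>
    rw [pow_succ] at hp
    refine Submodule.mul_induction_on hp (fun q hq r hr e he => ?_) (fun q r hq hr e he => ?_)
    · obtain ⟨e₁, he₁, e₂, he₂, rfl⟩ := Finset.mem_add.mp (support_mul _ _ he)
      rw [blockDeg_add]
      exact Nat.add_le_add (ih hq e₁ he₁) (one_le_blockDeg_of_mem_blockIdeal hr e₂ he₂)
    · rcases Finset.mem_union.mp (support_add he) with h | h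
      exacts [hq e h, hr e h]

lemma monomial_mem_prod_pow_blockIdeal [Fintype ι] {a : ι → ℕ} {e : (Σ i, κ i) →₀ ℕ}
    (h : a ≤ blockDeg e) : monomial e (1 : R) ∈ ∏ i, blockIdeal R κ i ^ a i := by
  rw [monomial_one_eq_prod_X_pow, Fintype.prod_sigma]
  refine Ideal.prod_mem_prod fun i _ => Ideal.pow_le_pow_right (h i) ?_
  rw [blockDeg, ← Finset.prod_pow_eq_pow_sum]
  exact Ideal.prod_mem_prod fun k _ =>
    Ideal.pow_mem_pow (Ideal.subset_span (Set.mem_range_self k)) _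

end Blocks

section Expansion

variable (K : Type*) [Field K] {n : ℕ}

lemma monomial_mem_monIdeal_iff (A : Set (Fin n → ℕ)) (b : Fin n → ℕ) :
    (∏ j, (X j : MvPolynomial (Fin n) K) ^ b j) ∈ monIdeal K A ↔ b ∈ upperClosure A := by
  have hgen (a : Fin n → ℕ) : ∏ j, (X j : MvPolynomial (Fin n) K) ^ a j =
      monomial (Finsupp.orderIsoFunOnFinite.symm a) 1 :=
    (monomial_one_eq_prod_X_pow (Finsupp.orderIsoFunOnFinite.symm a)).symm
  rw [monIdeal, funext hgen, hgen, ← Set.image_image (monomial · 1),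
    monomial_mem_span_monomial_image_iff, upperClosure_image, UpperSet.mem_map,
    OrderIso.symm_symm]
  rfl

lemma expIdeal_eq_restrictSupportIdeal (iv : Fin n → ℕ) (A : Set (Fin n → ℕ)) :
    expIdeal K iv A = restrictSupportIdeal K {e | blockDeg e ∈ upperClosure A}
      ((upperClosure A).upper.preimage (blockDeg_mono (κ := fun j => Fin (iv j)))) := by
  refine le_antisymm (iSup₂_le fun a ha p hp e he => ?_)
    (restrictSupportIdeal_le _ fun e he => ?_)
  · have hpj (j : Fin n) : p ∈ blockIdeal K (fun j => Fin (iv j)) j ^ a j :=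
      (Ideal.prod_le_inf.trans (Finset.inf_le (Finset.mem_univ j))) hp
    exact mem_upperClosure.2 ⟨a, ha, fun j => le_blockDeg_of_mem_pow_blockIdeal (hpj j) e he⟩
  · obtain ⟨a, ha, hae⟩ := mem_upperClosure.1 he
    exact Ideal.mem_iSup_of_mem a <|
      Ideal.mem_iSup_of_mem ha (monomial_mem_prod_pow_blockIdeal hae)

end Expansion

theorem expIdeal_inf_general (K : Type*) [Field K] {n : ℕ} (iv : Fin n → ℕ)
    (A B C : Set (Fin n → ℕ))
    (hC : monIdeal K C = monIdeal K A ⊓ monIdeal K B) :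
    expIdeal K iv C = expIdeal K iv A ⊓ expIdeal K iv B := by
  have hCAB (b : Fin n → ℕ) : b ∈ upperClosure C ↔ b ∈ upperClosure A ∧ b ∈ upperClosure B := by
    rw [← monomial_mem_monIdeal_iff K, hC, Ideal.mem_inf, monomial_mem_monIdeal_iff,
      monomial_mem_monIdeal_iff]
  ext f
  simp only [expIdeal_eq_restrictSupportIdeal, Ideal.mem_inf, mem_restrictSupportIdeal,
    Set.subset_def, Finset.mem_coe, Set.mem_ofPred_eq, hCAB, forall₂_and]

/-- Lemma 1.1(iv): `(I ∩ J)^* = I^* ∩ J^*`: if the monomial ideal generated by the monomials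
`x^c`, `c ∈ C`, equals `I ∩ J`, then its expansion equals `I^* ∩ J^*`. -/
theorem expIdeal_inf (K : Type*) [Field K] {n : ℕ} (iv : Fin n → ℕ)
    (hiv : ∀ j, 0 < iv j) (A B C : Set (Fin n → ℕ))
    (hC : monIdeal K C = monIdeal K A ⊓ monIdeal K B) :
    expIdeal K iv C = expIdeal K iv A ⊓ expIdeal K iv B :=
  expIdeal_inf_general K iv A B C hC
end

section
/- For a monomial ideal $I \subseteq S$, the expansion of the radical equals the radical of the expansion: $\sqrt{I^*} = (\sqrt{I})^*$. -/
/-!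
A monomial ideal `span {x^u | u ∈ s}` with `s` an upper set contains a polynomial iff its support
lies in `s`. Its radical is again monomial: monomial ideals are homogeneous for the grading by
`Lex (σ →₀ ℕ)`, whose homogeneous components are the terms of a polynomial, and radicals of
homogeneous ideals are homogeneous. So `x^u` lies in the radical iff `k • u ∈ s` for some `k`.

In `S^*`, `P_1^{a_1} ⋯ P_n^{a_n}` is the monomial ideal of the exponents `u` whose block degree
`π(u) = (∑_k u_{jk})_j` dominates `a`. Hence `x^u ∈ √(I^*)` iff some `k • π(u)` lies in the upper
closure of `A`, i.e. iff `x^{π(u)} ∈ √I`, i.e. iff `x^u ∈ (√I)^*`.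
-/
open MvPolynomial

namespace MvPolynomial

section MonomialIdeal

variable {σ R : Type*}

theorem mem_span_monomial_image_of_isUpperSet [CommSemiring R] {s : Set (σ →₀ ℕ)}
    (hs : IsUpperSet s) {x : MvPolynomial σ R} :
    x ∈ Ideal.span ((fun u => monomial u 1) '' s) ↔ ∀ u ∈ x.support, u ∈ s := by
  rw [mem_ideal_span_monomial_image]
  exact forall₂_congr fun u _ => ⟨fun ⟨v, hv, hvu⟩ => hs hvu hv, fun hu => ⟨u, hu, le_rfl⟩⟩

theorem weight_toLex_single_one [LinearOrder σ] (d : σ →₀ ℕ) :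
    Finsupp.weight (fun i => toLex (Finsupp.single i 1)) d = toLex d := by
  induction d using Finsupp.induction_linear with
  | zero => simp
  | add a b ha hb => rw [map_add, ha, hb, toLex_add]
  | single i m => rw [Finsupp.weight_single]; exact congrArg toLex (Finsupp.smul_single_one i m)

theorem weightedHomogeneousComponent_toLex [LinearOrder σ] [CommSemiring R]
    [DecidableEq (Lex (σ →₀ ℕ))] (x : MvPolynomial σ R) (u : σ →₀ ℕ) :
    weightedHomogeneousComponent (fun i => toLex (Finsupp.single i 1)) (toLex u) x =
      monomial u (x.coeff u) := by
  ext d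
  rw [coeff_weightedHomogeneousComponent, weight_toLex_single_one, coeff_monomial]
  by_cases h : u = d <;> simp [h, eq_comm]

attribute [local instance] weightedGradedAlgebra in
theorem monomial_coeff_mem_radical_span_monomial_image [CommRing R] {s : Set (σ →₀ ℕ)}
    {x : MvPolynomial σ R} (hx : x ∈ (Ideal.span ((fun u => monomial u 1) '' s)).radical)
    (u : σ →₀ ℕ) :
    monomial u (x.coeff u) ∈ (Ideal.span ((fun u => monomial u 1) '' s)).radical := by
  let : LinearOrder σ := IsWellOrder.linearOrder WellOrderingRel
  -- the instance `Ideal.IsHomogeneous.radical` uses; the default one on `Lex` is not defeq to it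
  let : DecidableEq (Lex (σ →₀ ℕ)) := LinearOrder.toDecidableEq
  have hhom : (Ideal.span ((fun u => monomial u (1 : R)) '' s)).IsHomogeneous
      (weightedHomogeneousSubmodule R fun i => toLex (Finsupp.single i 1)) := by
    refine Ideal.homogeneous_span _ _ ?_
    rintro _ ⟨d, -, rfl⟩
    exact ⟨toLex d, isWeightedHomogeneous_monomial _ _ _ (weight_toLex_single_one d)⟩
  rw [← weightedHomogeneousComponent_toLex]
  exact weightedHomogeneousComponent_mem_of_mem R _ hhom.radical hx _

theorem monomial_mem_radical_span_monomial_image [CommRing R] [IsReduced R]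
    {s : Set (σ →₀ ℕ)} {u : σ →₀ ℕ} {c : R} (hc : c ≠ 0) :
    monomial u c ∈ (Ideal.span ((fun u => monomial u 1) '' s)).radical ↔
      ∃ k : ℕ, ∃ si ∈ s, si ≤ k • u := by
  classical
  have hck : ∀ k : ℕ, c ^ k ≠ 0 := fun k hk => hc (IsReduced.eq_zero c ⟨k, hk⟩)
  simp only [Ideal.mem_radical_iff, monomial_pow, mem_ideal_span_monomial_image,
    support_monomial, if_neg (hck _), Finset.mem_singleton, forall_eq]

theorem mem_radical_span_monomial_image [CommRing R] [IsReduced R] {s : Set (σ →₀ ℕ)}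
    {x : MvPolynomial σ R} :
    x ∈ (Ideal.span ((fun u => monomial u 1) '' s)).radical ↔
      ∀ u ∈ x.support, ∃ k : ℕ, ∃ si ∈ s, si ≤ k • u := by
  refine ⟨fun hx u hu => ?_, fun h => ?_⟩
  · exact (monomial_mem_radical_span_monomial_image (mem_support_iff.mp hu)).mp
      (monomial_coeff_mem_radical_span_monomial_image hx u)
  · rw [x.as_sum]
    exact Ideal.sum_mem _ fun u hu =>
      (monomial_mem_radical_span_monomial_image (mem_support_iff.mp hu)).mpr (h u hu)

theorem mem_radical_span_monomial_image_of_isUpperSet [CommRing R] [IsReduced R]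
    {s : Set (σ →₀ ℕ)} (hs : IsUpperSet s) {x : MvPolynomial σ R} :
    x ∈ (Ideal.span ((fun u => monomial u 1) '' s)).radical ↔
      ∀ u ∈ x.support, ∃ k : ℕ, k • u ∈ s := by
  rw [mem_radical_span_monomial_image]
  exact forall₂_congr fun u _ =>
    ⟨fun ⟨k, v, hv, hvu⟩ => ⟨k, hs hvu hv⟩, fun ⟨k, hk⟩ => ⟨k, k • u, hk, le_rfl⟩⟩

end MonomialIdeal

noncomputable section Expansion

variable {R : Type*} [CommSemiring R] {ι : Type*} (κ : ι → Type*)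

variable (R) in
def blockIdeal (j : ι) : Ideal (MvPolynomial (Σ j, κ j) R) :=
  Ideal.span (Set.range fun k => X ⟨j, k⟩)

-- the exponent of `piHom (monomial u 1)`
def blockDegree : ((Σ j, κ j) →₀ ℕ) →+ (ι → ℕ) :=
  Finsupp.coeFnAddHom.comp (Finsupp.mapDomain.addMonoidHom Sigma.fst)

variable {κ}

theorem blockDegree_apply (u : (Σ j, κ j) →₀ ℕ) : blockDegree κ u = ⇑(u.mapDomain Sigma.fst) :=
  rfl

theorem blockDegree_mono : Monotone (blockDegree κ) := fun _ _ h =>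
  Finsupp.coe_mono (Finsupp.mapDomain_mono h)

theorem blockDegree_single [DecidableEq ι] (j : ι) (k : κ j) (m : ℕ) :
    blockDegree κ (Finsupp.single ⟨j, k⟩ m) = Pi.single j m := by
  rw [blockDegree_apply, Finsupp.mapDomain_single, Finsupp.single_eq_pi_single]

theorem isUpperSet_preimage_blockDegree_upperClosure (A : Set (ι → ℕ)) :
    IsUpperSet (blockDegree κ ⁻¹' upperClosure A) :=
  (upperClosure A).upper.preimage blockDegree_mono

variable (R κ) in
def blockDegreeIdeal (a : ι → ℕ) : Ideal (MvPolynomial (Σ j, κ j) R) :=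
  Ideal.span ((fun u => monomial u 1) '' (blockDegree κ ⁻¹' Set.Ici a))

theorem mem_blockDegreeIdeal {a : ι → ℕ} {p : MvPolynomial (Σ j, κ j) R} :
    p ∈ blockDegreeIdeal R κ a ↔ ∀ u ∈ p.support, a ≤ blockDegree κ u :=
  mem_span_monomial_image_of_isUpperSet (isUpperSet_Ici a |>.preimage blockDegree_mono)

theorem blockDegreeIdeal_mul_le (a b : ι → ℕ) :
    blockDegreeIdeal R κ a * blockDegreeIdeal R κ b ≤ blockDegreeIdeal R κ (a + b) := by
  classical
  refine Ideal.mul_le.mpr fun p hp q hq => mem_blockDegreeIdeal.mpr fun u hu => ?_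
  obtain ⟨v, hv, w, hw, rfl⟩ := Finset.mem_add.mp (support_mul p q hu)
  rw [map_add]
  exact add_le_add (mem_blockDegreeIdeal.mp hp v hv) (mem_blockDegreeIdeal.mp hq w hw)

theorem prod_blockDegreeIdeal_le {α : Type*} (s : Finset α) (a : α → ι → ℕ) :
    ∏ i ∈ s, blockDegreeIdeal R κ (a i) ≤ blockDegreeIdeal R κ (∑ i ∈ s, a i) := by
  classical
  induction s using Finset.induction with
  | empty =>
    rw [Finset.prod_empty, Finset.sum_empty, Submodule.one_le, mem_blockDegreeIdeal]
    exact fun _ _ _ => Nat.zero_le _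
  | insert i s hi ih =>
    rw [Finset.prod_insert hi, Finset.sum_insert hi]
    exact (Ideal.mul_mono_right ih).trans (blockDegreeIdeal_mul_le _ _)

theorem blockIdeal_le [DecidableEq ι] (j : ι) :
    blockIdeal R κ j ≤ blockDegreeIdeal R κ (Pi.single j 1) := by
  refine Ideal.span_le.mpr ?_
  rintro _ ⟨k, rfl⟩
  exact Ideal.subset_span ⟨_, (blockDegree_single j k 1).ge, rfl⟩

theorem prod_blockIdeal_pow_le [Fintype ι] (a : ι → ℕ) :
    ∏ j, blockIdeal R κ j ^ a j ≤ blockDegreeIdeal R κ a := by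
  classical
  calc ∏ j, blockIdeal R κ j ^ a j
      ≤ ∏ j, ∏ _i ∈ Finset.range (a j), blockDegreeIdeal R κ (Pi.single j 1) :=
        Finset.prod_le_prod' fun j _ => by
          rw [Finset.prod_const, Finset.card_range]
          exact pow_le_pow_left' (blockIdeal_le j) _
    _ ≤ ∏ j, blockDegreeIdeal R κ (∑ _i ∈ Finset.range (a j), Pi.single j 1) :=
        Finset.prod_le_prod' fun j _ => prod_blockDegreeIdeal_le _ _
    _ ≤ blockDegreeIdeal R κ (∑ j, ∑ _i ∈ Finset.range (a j), Pi.single j 1) :=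
        prod_blockDegreeIdeal_le _ _
    _ = blockDegreeIdeal R κ a := by
        simp only [Finset.sum_const, Finset.card_range, ← Pi.single_smul', smul_eq_mul, mul_one,
          Finset.univ_sum_single]

theorem monomial_mem_prod_blockIdeal_pow [Fintype ι] (u : (Σ j, κ j) →₀ ℕ) :
    monomial u (1 : R) ∈ ∏ j, blockIdeal R κ j ^ blockDegree κ u j := by
  rw [blockDegree_apply,
    ← Finsupp.prod_fintype _ (fun j m => blockIdeal R κ j ^ m) fun _ => pow_zero _,
    Finsupp.prod_mapDomain_index (fun _ => pow_zero _) fun _ _ _ => pow_add _ _ _,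
    ← prod_X_pow_eq_monomial]
  exact Ideal.prod_mem_prod fun s _ =>
    Ideal.pow_mem_pow (Ideal.subset_span ⟨s.2, rfl⟩ : X s ∈ blockIdeal R κ s.1) _

theorem prod_blockIdeal_pow_eq [Fintype ι] (a : ι → ℕ) :
    ∏ j, blockIdeal R κ j ^ a j = blockDegreeIdeal R κ a := by
  refine (prod_blockIdeal_pow_le a).antisymm (Ideal.span_le.mpr ?_)
  rintro _ ⟨u, hu, rfl⟩
  exact Finset.prod_le_prod' (fun j _ => Ideal.pow_le_pow_right (hu j))
    (monomial_mem_prod_blockIdeal_pow u)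

theorem iSup_prod_blockIdeal_pow_eq [Fintype ι] (A : Set (ι → ℕ)) :
    ⨆ a ∈ A, ∏ j, blockIdeal R κ j ^ a j =
      Ideal.span ((fun u => monomial u 1) '' (blockDegree κ ⁻¹' upperClosure A)) := by
  simp only [prod_blockIdeal_pow_eq, blockDegreeIdeal, ← Ideal.span_iUnion, Set.image_iUnion,
    coe_upperClosure, Set.preimage_iUnion]

end Expansion

end MvPolynomial

theorem isUpperSet_preimage_coe_upperClosure {ι : Type*} (A : Set (ι → ℕ)) :
    IsUpperSet (((⇑) : (ι →₀ ℕ) → ι → ℕ) ⁻¹' upperClosure A) :=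
  (upperClosure A).upper.preimage Finsupp.coe_mono

theorem monIdeal_eq_span (K : Type*) [Field K] {n : ℕ} (A : Set (Fin n → ℕ)) :
    monIdeal K A = Ideal.span ((fun d => monomial d 1) '' ((⇑) ⁻¹' upperClosure A)) := by
  have hX : ∀ a : Fin n → ℕ, ∏ j, (X j : MvPolynomial (Fin n) K) ^ a j =
      monomial (Finsupp.equivFunOnFinite.symm a) 1 := fun a => by
    rw [monomial_eq, C_1, one_mul, Finsupp.prod_pow]
    simp
  ext p
  rw [monIdeal, Set.image_congr fun a _ => hX a, ← Set.image_image (fun d => monomial d (1 : K)),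
    mem_ideal_span_monomial_image,
    mem_span_monomial_image_of_isUpperSet (isUpperSet_preimage_coe_upperClosure A)]
  refine forall₂_congr fun d _ => ?_
  simp only [Set.exists_mem_image, mem_upperClosure, Set.mem_preimage, SetLike.mem_coe,
    ← Finsupp.coe_le_coe, Finsupp.coe_equivFunOnFinite_symm]

theorem mem_upperClosure_iff_of_monIdeal_eq_radical {K : Type*} [Field K] {n : ℕ}
    {A C : Set (Fin n → ℕ)} (hC : monIdeal K C = (monIdeal K A).radical) (d : Fin n → ℕ) :
    d ∈ upperClosure C ↔ ∃ k : ℕ, k • d ∈ upperClosure A := by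
  have hd := congrArg (monomial (Finsupp.equivFunOnFinite.symm d) (1 : K) ∈ ·) hC
  rw [eq_iff_iff, monIdeal_eq_span, monIdeal_eq_span,
    mem_span_monomial_image_of_isUpperSet (isUpperSet_preimage_coe_upperClosure C),
    mem_radical_span_monomial_image_of_isUpperSet (isUpperSet_preimage_coe_upperClosure A)] at hd
  simpa [support_monomial] using hd

theorem expIdeal_eq_span (K : Type*) [Field K] {n : ℕ} (iv : Fin n → ℕ) (A : Set (Fin n → ℕ)) :
    expIdeal K iv A = Ideal.span ((fun u => monomial u 1) '' (blockDegree _ ⁻¹' upperClosure A)) :=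
  iSup_prod_blockIdeal_pow_eq A

theorem mem_expIdeal {K : Type*} [Field K] {n : ℕ} {iv : Fin n → ℕ} {A : Set (Fin n → ℕ)}
    {p : MvPolynomial ((j : Fin n) × Fin (iv j)) K} :
    p ∈ expIdeal K iv A ↔ ∀ u ∈ p.support, blockDegree _ u ∈ upperClosure A := by
  rw [expIdeal_eq_span]
  exact mem_span_monomial_image_of_isUpperSet (isUpperSet_preimage_blockDegree_upperClosure A)

theorem mem_radical_expIdeal {K : Type*} [Field K] {n : ℕ} {iv : Fin n → ℕ}
    {A : Set (Fin n → ℕ)} {p : MvPolynomial ((j : Fin n) × Fin (iv j)) K} :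
    p ∈ (expIdeal K iv A).radical ↔
      ∀ u ∈ p.support, ∃ k : ℕ, k • blockDegree _ u ∈ upperClosure A := by
  rw [expIdeal_eq_span,
    mem_radical_span_monomial_image_of_isUpperSet (isUpperSet_preimage_blockDegree_upperClosure A)]
  simp only [Set.mem_preimage, map_nsmul, SetLike.mem_coe]

theorem expIdeal_radical_general (K : Type*) [Field K] {n : ℕ} (iv : Fin n → ℕ)
    (A C : Set (Fin n → ℕ))
    (hC : monIdeal K C = (monIdeal K A).radical) :
    expIdeal K iv C = (expIdeal K iv A).radical := by
  ext p
  simp only [mem_expIdeal, mem_radical_expIdeal, mem_upperClosure_iff_of_monIdeal_eq_radical hC]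

/-- Lemma 1.1(vi): `√(I^*) = (√I)^*`: if the monomial ideal generated by the monomials
`x^c`, `c ∈ C`, equals `√I`, then its expansion is the radical of `I^*`. -/
theorem expIdeal_radical (K : Type*) [Field K] {n : ℕ} (iv : Fin n → ℕ)
    (hiv : ∀ j, 0 < iv j) (A C : Set (Fin n → ℕ))
    (hC : monIdeal K C = (monIdeal K A).radical) :
    expIdeal K iv C = (expIdeal K iv A).radical :=
  expIdeal_radical_general K iv A C hC
end

section
/- For a monomial ideal $I \subseteq S$ and any $k \ge 1$, the expansion commutes with powers: $(I^k)^* = (I^*)^k$. -/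
/-!
`I^*` is the supremum over `a ∈ A` of `Q a = ∏ j, P_j ^ a j`, and `Q` turns sums of exponent
vectors into products of ideals. Since multiplication of ideals distributes over suprema,
`(⨆ a ∈ A, Q a) ^ k = ⨆ c ∈ k • A, Q c`, and the `k`-fold sumset `k • A` is the set of
exponents generating `I^k`.
-/

open MvPolynomial

open Pointwise

section
variable {R M : Type*} [CommSemiring R] [AddCommMonoid M] {Q : M → Ideal R}

theorem biSup_mul_biSup (hQ : ∀ a b, Q (a + b) = Q a * Q b) (A B : Set M) :
    (⨆ a ∈ A, Q a) * (⨆ b ∈ B, Q b) = ⨆ c ∈ A + B, Q c := by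
  simp only [← Set.image2_add, iSup_image2, hQ, Ideal.iSup_mul, Ideal.mul_iSup]
  exact iSup₂_comm _

theorem biSup_pow (hQ0 : Q 0 = 1) (hQ : ∀ a b, Q (a + b) = Q a * Q b) (A : Set M) (k : ℕ) :
    (⨆ a ∈ A, Q a) ^ k = ⨆ c ∈ k • A, Q c := by
  induction k with
  | zero => simp [hQ0]
  | succ k ih => rw [pow_succ, ih, biSup_mul_biSup hQ, succ_nsmul]

end

theorem Set.nsmul_eq_setOf_sum {M : Type*} [AddCommMonoid M] (A : Set M) (k : ℕ) :
    k • A = {c | ∃ f : Fin k → M, (∀ l, f l ∈ A) ∧ c = ∑ l, f l} := by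
  ext c
  simp only [Set.mem_nsmul, List.sum_ofFn, Set.mem_ofPred_eq]
  constructor
  · rintro ⟨f, rfl⟩
    exact ⟨_, fun l => (f l).2, rfl⟩
  · rintro ⟨f, hf, rfl⟩
    exact ⟨fun l => ⟨f l, hf l⟩, rfl⟩

theorem expIdeal_pow_general (K : Type*) [Field K] {n : ℕ} (iv : Fin n → ℕ)
    (A : Set (Fin n → ℕ)) (k : ℕ) :
    expIdeal K iv {c | ∃ f : Fin k → (Fin n → ℕ), (∀ l, f l ∈ A) ∧ c = ∑ l, f l}
      = (expIdeal K iv A) ^ k := by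
  rw [← Set.nsmul_eq_setOf_sum]
  refine (biSup_pow ?_ ?_ A k).symm
  · simp
  · intro a b
    simp only [Pi.add_apply, pow_add, Finset.prod_mul_distrib]

/-- `(I^k)^* = (I^*)^k`: the `k`-th power of `I` is the monomial ideal generated by the
`k`-fold sums of exponent vectors from `A`, and its expansion is the `k`-th power of `I^*`. -/
theorem expIdeal_pow (K : Type*) [Field K] {n : ℕ} (iv : Fin n → ℕ)
    (hiv : ∀ j, 0 < iv j) (A : Set (Fin n → ℕ)) (k : ℕ) (hk : 1 ≤ k) :
    expIdeal K iv {c | ∃ f : Fin k → (Fin n → ℕ), (∀ l, f l ∈ A) ∧ c = ∑ l, f l}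
      = (expIdeal K iv A) ^ k :=
  expIdeal_pow_general K iv A k
end

section
/- Let $I$ be a monomial ideal. Then for every $k \ge 1$, the expansion of the $k$-th symbolic power equals the $k$-th symbolic power of the expansion: $(I^{(k)})^* = (I^*)^{(k)}$. -/
open MvPolynomial

/-- The `k`-th symbolic power of an ideal `I`: the elements `f` such that `s f ∈ I^k`
for some `s` outside every minimal prime of `I`.  (For a monomial ideal this is the
intersection of the primary components of `I^k` at the minimal primes of `I`.) -/
noncomputable def symbolicPower {R : Type*} [CommRing R] (I : Ideal R) (k : ℕ) : Ideal R where
  carrier := {f | ∃ s : R, (∀ P ∈ I.minimalPrimes, s ∉ P) ∧ s * f ∈ I ^ k}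
  zero_mem' := ⟨1, fun P hP h1 => hP.1.1.ne_top ((Ideal.eq_top_iff_one P).2 h1),
    by simp⟩
  add_mem' := by
    rintro a b ⟨s, hs, hsa⟩ ⟨t, ht, htb⟩
    refine ⟨s * t, fun P hP hst => ?_, ?_⟩
    · rcases hP.1.1.mem_or_mem hst with h | h
      exacts [hs P hP h, ht P hP h]
    · have : s * t * (a + b) = t * (s * a) + s * (t * b) := by ring
      rw [this]
      exact Ideal.add_mem _ (Ideal.mul_mem_left _ _ hsa) (Ideal.mul_mem_left _ _ htb)
  smul_mem' := by
    rintro c a ⟨s, hs, hsa⟩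
    refine ⟨s, hs, ?_⟩
    have : s * (c • a) = c * (s * a) := by simp [smul_eq_mul]; ring
    rw [this]
    exact Ideal.mul_mem_left _ _ hsa

/-!
In both `S` and `S^*` the ideal in question is obtained from `A` by substituting for `x_j` the
ideal generated by the variables over `j` of a surjection `φ` of variable sets (the identity for
`S`, `(j, k) ↦ j` for `S^*`). For such an ideal `J` everything is read off the pushed-forward
exponents `φ_* d`: the minimal primes are generated by the variables over the minimal vertex
covers `F` of the supports of `A`, and `J^k` comes from the sumset `k • A`. By prime avoidance, and
because an `s` outside such a prime is a nonzerodivisor modulo the corresponding saturation of a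
monomial ideal (some monomial of `s * f` is attained only once), `x^d ∈ J^{(k)}` iff for each
minimal cover `F` some `b ∈ k • A` satisfies `b ≤ φ_* d` on `F`. This depends on `d` only through
`φ_* d`, so `x^d ∈ (I^*)^{(k)} ↔ x^{φ_* d} ∈ I^{(k)} = I_C ↔ x^d ∈ (I_C)^*`.
-/

open Pointwise

theorem Finsupp.weight_indicator_eq_zero_iff {σ : Type*} {V : Set σ} {m : σ →₀ ℕ} :
    Finsupp.weight (V.indicator 1) m = 0 ↔ ∀ i ∈ V, m i = 0 := by
  classical
  simp only [Finsupp.weight_apply, Finsupp.sum, smul_eq_mul, Finset.sum_eq_zero_iff,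
    mul_eq_zero, Finsupp.mem_support_iff, Set.indicator_apply_eq_zero, Pi.one_apply]
  exact ⟨fun h i hi => by_contra fun hm => one_ne_zero ((h i hm).resolve_left hm hi),
    fun h i _ => or_iff_not_imp_left.2 fun hm hi => absurd (h i hi) hm⟩

theorem Finsupp.mapDomain_apply_eq_sum_filter {σ ι M : Type*} [Fintype σ] [DecidableEq ι]
    [AddCommMonoid M] (φ : σ → ι) (d : σ →₀ M) (j : ι) :
    d.mapDomain φ j = ∑ i with φ i = j, d i := by
  simp [Finsupp.mapDomain, Finsupp.sum_fintype, Finsupp.single_apply, Finset.sum_filter]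

theorem mem_symbolicPower_iff {R : Type*} [CommRing R] [IsNoetherianRing R] {I : Ideal R}
    {k : ℕ} {f : R} : f ∈ symbolicPower I k ↔ ∀ P ∈ I.minimalPrimes, ∃ s ∉ P, s * f ∈ I ^ k := by
  refine ⟨fun ⟨s, hs, hsf⟩ P hP => ⟨s, hs P hP, hsf⟩, fun h => ?_⟩
  have hcolon : ¬((I ^ k).colon {f} : Set R) ⊆ ⋃ P ∈ I.minimalPrimes, P := by
    intro hsub
    obtain ⟨P, hP, hle⟩ := (Ideal.subset_union_prime_finite
      (I.finite_minimalPrimes_of_isNoetherianRing R) (f := id) ⊥ ⊥ fun P hP _ _ => hP.1.1).1 hsub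
    obtain ⟨s, hs, hsf⟩ := h P hP
    exact hs (hle (Submodule.mem_colon_singleton.2 hsf))
  obtain ⟨s, hs, hsP⟩ := Set.not_subset.1 hcolon
  exact ⟨s, fun P hP hsP' => hsP (Set.mem_biUnion hP hsP'), Submodule.mem_colon_singleton.1 hs⟩

def IsVertexCover {ι : Type*} (A : Set (ι → ℕ)) (F : Set ι) : Prop :=
  ∀ a ∈ A, ∃ j ∈ F, a j ≠ 0

namespace Ideal

variable {R ι : Type*} [CommSemiring R] [Fintype ι]

def monomialSubst (P : ι → Ideal R) (A : Set (ι → ℕ)) : Ideal R :=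
  ⨆ a ∈ A, ∏ j, P j ^ a j

theorem monomialSubst_mul (P : ι → Ideal R) (A B : Set (ι → ℕ)) :
    monomialSubst P A * monomialSubst P B = monomialSubst P (A + B) := by
  simp only [monomialSubst, Ideal.iSup_mul]
  simp only [Ideal.mul_iSup, ← Set.image2_add, iSup_image2, ← Finset.prod_mul_distrib, ← pow_add,
    Pi.add_apply]

theorem monomialSubst_pow (P : ι → Ideal R) (A : Set (ι → ℕ)) (k : ℕ) :
    monomialSubst P A ^ k = monomialSubst P (k • A) := by
  induction k with
  | zero => simp [monomialSubst, Ideal.top_pow]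
  | succ k ih => rw [pow_succ, ih, monomialSubst_mul, succ_nsmul]

theorem monomialSubst_le_iff_of_isPrime (P : ι → Ideal R) (A : Set (ι → ℕ)) {Q : Ideal R}
    [hQ : Q.IsPrime] : monomialSubst P A ≤ Q ↔ IsVertexCover A {j | P j ≤ Q} := by
  simp only [monomialSubst, iSup₂_le_iff, hQ.prod_le, Finset.mem_univ, true_and, IsVertexCover,
    Set.mem_ofPred_eq]
  refine forall₂_congr fun a _ => exists_congr fun j => ?_
  by_cases h : a j = 0
  · simp [h, Ideal.one_eq_top, hQ.ne_top]
  · simp [h, hQ.pow_le_iff h]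

section MinimalPrimes

variable {P : ι → Ideal R} (hprime : ∀ F : Set ι, (⨆ j ∈ F, P j).IsPrime)
  (hP : ∀ j (F : Set ι), P j ≤ ⨆ i ∈ F, P i → j ∈ F)
include hprime hP

theorem monomialSubst_le_iSup_iff (A : Set (ι → ℕ)) (F : Set ι) :
    monomialSubst P A ≤ ⨆ j ∈ F, P j ↔ IsVertexCover A F := by
  have := hprime F
  rw [monomialSubst_le_iff_of_isPrime,
    show {j | P j ≤ ⨆ i ∈ F, P i} = F from Set.ext fun j => ⟨hP j F, fun hj => le_biSup P hj⟩]

theorem minimalPrimes_monomialSubst (A : Set (ι → ℕ)) :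
    (monomialSubst P A).minimalPrimes =
      (fun F => ⨆ j ∈ F, P j) '' {F | Minimal (IsVertexCover A) F} := by
  ext Q
  constructor
  · rintro ⟨⟨hQ, hIQ⟩, hmin⟩
    have hG := (monomialSubst_le_iff_of_isPrime P A).1 hIQ
    have hGQ : ⨆ j ∈ {j | P j ≤ Q}, P j = Q := le_antisymm (iSup₂_le fun _ => id)
      (hmin ⟨hprime _, (monomialSubst_le_iSup_iff hprime hP A _).2 hG⟩ (iSup₂_le fun _ => id))
    refine ⟨_, ⟨hG, fun H hH hHG j hj => hP j H (hj.trans (hmin ?_ ?_))⟩, hGQ⟩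
    exacts [⟨hprime H, (monomialSubst_le_iSup_iff hprime hP A H).2 hH⟩,
      (biSup_mono hHG).trans_eq hGQ]
  · rintro ⟨F, hF, rfl⟩
    refine ⟨⟨hprime F, (monomialSubst_le_iSup_iff hprime hP A F).2 hF.prop⟩,
      fun Q ⟨hQ, hIQ⟩ hQF => iSup₂_le fun j hj => ?_⟩
    exact hF.le_of_le ((monomialSubst_le_iff_of_isPrime P A).1 hIQ)
      (fun i hi => hP i F (hi.trans hQF)) hj

end MinimalPrimes

end Ideal

namespace MvPolynomial

variable {σ R : Type*} [CommRing R]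

theorem exists_add_mem_support_mul [NoZeroDivisors R] (w : (σ →₀ ℕ) →+ ℕ)
    {s f : MvPolynomial σ R} (hs : ∃ a ∈ s.support, w a = 0) (hf : f ≠ 0) :
    ∃ a ∈ s.support, w a = 0 ∧ ∃ b ∈ f.support, (∀ b' ∈ f.support, w b ≤ w b') ∧
      a + b ∈ (s * f).support := by
  classical
  obtain ⟨a₀, ha₀, hwa₀⟩ := hs
  obtain ⟨b₀, hb₀, hmin⟩ := f.support.exists_min_image w (support_nonempty.2 hf)
  obtain ⟨a, ha, b, hb, huniq⟩ := UniqueSums.uniqueAdd_of_nonempty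
    (A := {a ∈ s.support | w a = 0}) (B := {b ∈ f.support | w b = w b₀})
    ⟨a₀, Finset.mem_filter.2 ⟨ha₀, hwa₀⟩⟩ ⟨b₀, Finset.mem_filter.2 ⟨hb₀, rfl⟩⟩
  rw [Finset.mem_filter] at ha hb
  refine ⟨a, ha.1, ha.2, b, hb.1, hb.2 ▸ hmin, ?_⟩
  -- `a` has the least possible weight in `s` and `b` in `f`, so `a + b` arises only once
  have hunique : UniqueAdd s.support f.support a b := by
    intro a' b' ha' hb' he
    have hw : w a' + w b' = w a + w b := by rw [← map_add, ← map_add, he]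
    have := hmin b' hb'
    exact huniq (Finset.mem_filter.2 ⟨ha', by omega⟩) (Finset.mem_filter.2 ⟨hb', by omega⟩) he
  exact mem_support_iff.2 <| (AddMonoidAlgebra.coeff_mul_add_of_uniqueAdd hunique).trans_ne <|
    mul_ne_zero (mem_support_iff.1 ha.1) (mem_support_iff.1 hb.1)

variable (R) in
noncomputable def varIdeal (V : Set σ) : Ideal (MvPolynomial σ R) :=
  Ideal.span (X '' V)

theorem notMem_varIdeal_iff {V : Set σ} {f : MvPolynomial σ R} :
    f ∉ varIdeal R V ↔ ∃ m ∈ f.support, Finsupp.weight (V.indicator 1) m = 0 := by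
  simp [varIdeal, mem_ideal_span_X_image, Finsupp.weight_indicator_eq_zero_iff]

theorem X_mem_varIdeal_iff [Nontrivial R] {V : Set σ} {i : σ} :
    (X i : MvPolynomial σ R) ∈ varIdeal R V ↔ i ∈ V := by
  classical
  simp [varIdeal, mem_ideal_span_X_image, support_X, Finsupp.single_apply]

theorem varIdeal_isPrime [IsDomain R] (V : Set σ) : (varIdeal R V).IsPrime := by
  refine ⟨fun h => ?_, fun {s f} hsf => ?_⟩
  · have h1 : (1 : MvPolynomial σ R) ∉ varIdeal R V :=
      notMem_varIdeal_iff.2 ⟨0, by simp, map_zero _⟩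
    exact h1 (h ▸ Submodule.mem_top)
  · rw [or_iff_not_and_not]
    rintro ⟨hs, hf⟩
    obtain ⟨b₀, hb₀, hwb₀⟩ := notMem_varIdeal_iff.1 hf
    obtain ⟨a, -, hwa, b, hb, hmin, hab⟩ := exists_add_mem_support_mul _
      (notMem_varIdeal_iff.1 hs) (f := f) (by rintro rfl; simp at hb₀)
    refine notMem_varIdeal_iff.2 ⟨a + b, hab, ?_⟩ hsf
    have := hmin b₀ hb₀
    rw [map_add]
    omega

theorem mem_restrictSupportIdeal_iff {U : Set (σ →₀ ℕ)} (hU : IsUpperSet U)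
    {f : MvPolynomial σ R} : f ∈ restrictSupportIdeal R U hU ↔ ∀ d ∈ f.support, d ∈ U :=
  Iff.rfl

theorem monomial_mem_restrictSupportIdeal {U : Set (σ →₀ ℕ)} (hU : IsUpperSet U) {d : σ →₀ ℕ}
    (hd : d ∈ U) (c : R) : monomial d c ∈ restrictSupportIdeal R U hU :=
  (monomial_mem_restrictSupport R).2 (Or.inl hd)

theorem mem_restrictSupportIdeal_of_mul_mem [NoZeroDivisors R] {U : Set (σ →₀ ℕ)}
    (hU : IsUpperSet U) {V : Set σ} (hUV : ∀ a d, (∀ i ∈ V, a i = 0) → a + d ∈ U → d ∈ U)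
    {s f : MvPolynomial σ R} (hs : s ∉ varIdeal R V)
    (hsf : s * f ∈ restrictSupportIdeal R U hU) : f ∈ restrictSupportIdeal R U hU := by
  classical
  set J := restrictSupportIdeal R U hU
  set g := ∑ d ∈ f.support with d ∉ U, monomial d (coeff d f)
  have hfg : f - g ∈ J := by
    rw [sub_eq_iff_eq_add.2
      (f.as_sum.trans (Finset.sum_filter_add_sum_filter_not _ (· ∈ U) _).symm)]
    exact J.sum_mem fun d hd => monomial_mem_restrictSupportIdeal hU (Finset.mem_filter.1 hd).2 _
  have hgU : ∀ d ∈ g.support, d ∉ U := by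
    intro d hd hdU
    simp [g, coeff_sum, coeff_monomial, hdU] at hd
  -- a monomial `a + b` of `s * g` with `a` free of `V` would put `b ∈ g.support` into `U`
  suffices g = 0 by simpa [this] using hfg
  by_contra hg
  obtain ⟨a, -, ha, b, hb, -, hab⟩ := exists_add_mem_support_mul _ (notMem_varIdeal_iff.1 hs) hg
  have hsg : s * g ∈ J := by
    rw [show s * g = s * f - s * (f - g) by ring]
    exact J.sub_mem hsf (J.mul_mem_left s hfg)
  exact hgU b hb (hUV a b (Finsupp.weight_indicator_eq_zero_iff.1 ha) (hsg hab))

theorem exists_mul_mem_restrictSupportIdeal_iff [IsDomain R] {U : Set (σ →₀ ℕ)}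
    (hU : IsUpperSet U) {V : Set σ} {f : MvPolynomial σ R} :
    (∃ s ∉ varIdeal R V, s * f ∈ restrictSupportIdeal R U hU) ↔
      ∀ d ∈ f.support, ∃ ν : σ →₀ ℕ, (∀ i ∈ V, ν i = 0) ∧ ν + d ∈ U := by
  classical
  constructor
  · rintro ⟨s, hs, hsf⟩
    let U' := {d | ∃ ν : σ →₀ ℕ, (∀ i ∈ V, ν i = 0) ∧ ν + d ∈ U}
    have hU' : IsUpperSet U' := fun d d' hdd' ⟨ν, hν, hνd⟩ =>
      ⟨ν, hν, hU (add_le_add_right hdd' ν) hνd⟩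
    have hsat : ∀ a d, (∀ i ∈ V, a i = 0) → a + d ∈ U' → d ∈ U' := fun a d ha ⟨ν, hν, h⟩ =>
      ⟨ν + a, fun i hi => by simp [hν i hi, ha i hi], by rwa [add_assoc]⟩
    exact mem_restrictSupportIdeal_of_mul_mem hU' hsat hs fun d hd =>
      ⟨0, fun _ _ => rfl, by rw [zero_add]; exact hsf hd⟩
  · intro h
    choose! ν hνV hνU using h
    let N := ∑ d ∈ f.support, ν d
    refine ⟨monomial N 1, notMem_varIdeal_iff.2 ⟨N, by simp [support_monomial], ?_⟩, ?_⟩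
    · refine Finsupp.weight_indicator_eq_zero_iff.2 fun i hi => ?_
      simp only [N, Finsupp.finsetSum_apply]
      exact Finset.sum_eq_zero fun d hd => hνV d hd i hi
    · rw [f.as_sum, Finset.mul_sum]
      refine Ideal.sum_mem _ fun d hd => ?_
      rw [monomial_mul, one_mul]
      have hN : ν d ≤ N := Finset.single_le_sum (f := ν) (fun _ _ => zero_le) hd
      exact monomial_mem_restrictSupportIdeal hU (hU (add_le_add hN le_rfl) (hνU d hd)) _

end MvPolynomial


namespace MvPolynomial

variable {σ ι R : Type*} [CommRing R]

theorem iSup_varIdeal_preimage (φ : σ → ι) (F : Set ι) :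
    ⨆ j ∈ F, varIdeal R (φ ⁻¹' {j}) = varIdeal R (φ ⁻¹' F) := by
  simp only [varIdeal, ← Ideal.span_iUnion, ← Set.image_iUnion, ← Set.preimage_iUnion,
    Set.biUnion_of_singleton]

theorem isUpperSet_exists_le_mapDomain (φ : σ → ι) (A : Set (ι → ℕ)) :
    IsUpperSet {d : σ →₀ ℕ | ∃ a ∈ A, a ≤ ⇑(d.mapDomain φ)} :=
  fun _ _ h ⟨a, ha, had⟩ => ⟨a, ha, had.trans (Finsupp.mapDomain_mono h)⟩

variable [Fintype σ]

theorem pow_varIdeal_preimage_le (φ : σ → ι) (j : ι) (m : ℕ) :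
    varIdeal R (φ ⁻¹' {j}) ^ m ≤
      restrictSupportIdeal R {d | m ≤ d.mapDomain φ j}
        (fun _ _ h hd => hd.trans (Finsupp.mapDomain_mono h j)) := by
  classical
  induction m with
  | zero => exact fun _ _ _ _ => Nat.zero_le _
  | succ m ih =>
    rw [pow_succ, Ideal.mul_le]
    intro f hf g hg d hd
    obtain ⟨d₁, hd₁, d₂, hd₂, rfl⟩ := Finset.mem_add.1 (support_mul f g hd)
    obtain ⟨i, hi, hd₂i⟩ := mem_ideal_span_X_image.1 hg d₂ hd₂
    have h₁ : m ≤ d₁.mapDomain φ j := ih hf hd₁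
    have h₂ : 1 ≤ d₂.mapDomain φ j := by
      rw [Finsupp.mapDomain_apply_eq_sum_filter]
      exact (Nat.one_le_iff_ne_zero.2 hd₂i).trans
        (Finset.single_le_sum (fun _ _ => zero_le) (Finset.mem_filter.2 ⟨Finset.mem_univ _, hi⟩))
    show m + 1 ≤ (d₁ + d₂).mapDomain φ j
    rw [Finsupp.mapDomain_add, Finsupp.add_apply]
    omega

theorem monomial_one_mem_prod_pow_varIdeal [Fintype ι] (φ : σ → ι) (d : σ →₀ ℕ) :
    monomial d (1 : R) ∈ ∏ j, varIdeal R (φ ⁻¹' {j}) ^ d.mapDomain φ j := by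
  classical
  rw [monomial_eq, C_1, one_mul, Finsupp.prod_fintype _ _ fun _ => pow_zero _,
    ← Finset.prod_fiberwise Finset.univ φ]
  refine Ideal.prod_mem_prod fun j _ => ?_
  rw [Finsupp.mapDomain_apply_eq_sum_filter, ← Finset.prod_pow_eq_pow_sum]
  exact Ideal.prod_mem_prod fun i hi =>
    Ideal.pow_mem_pow (Ideal.subset_span <| Set.mem_image_of_mem X <|
      show i ∈ φ ⁻¹' {j} from (Finset.mem_filter.1 hi).2) _

theorem monomialSubst_varIdeal_eq [Fintype ι] (φ : σ → ι) (A : Set (ι → ℕ)) :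
    Ideal.monomialSubst (fun j => varIdeal R (φ ⁻¹' {j})) A =
      restrictSupportIdeal R _ (isUpperSet_exists_le_mapDomain φ A) := by
  apply le_antisymm
  · refine iSup₂_le fun a ha f hf d hd => ⟨a, ha, fun j => ?_⟩
    have hfj : f ∈ varIdeal R (φ ⁻¹' {j}) ^ a j :=
      Finset.inf_le (f := fun j => varIdeal R (φ ⁻¹' {j}) ^ a j) (Finset.mem_univ j)
        (Ideal.prod_le_inf hf)
    exact pow_varIdeal_preimage_le φ j (a j) hfj hd
  · intro f hf
    rw [f.as_sum]
    refine Ideal.sum_mem _ fun d hd => ?_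
    obtain ⟨a, ha, had⟩ := hf hd
    rw [← mul_one (coeff d f), ← C_mul_monomial]
    have hle : ∏ j, varIdeal R (φ ⁻¹' {j}) ^ d.mapDomain φ j ≤
        Ideal.monomialSubst (fun j => varIdeal R (φ ⁻¹' {j})) A :=
      le_iSup₂_of_le a ha (Finset.prod_le_prod' fun j _ => Ideal.pow_le_pow_right (had j))
    exact Ideal.mul_mem_left _ _ (hle (monomial_one_mem_prod_pow_varIdeal φ d))

theorem exists_le_mapDomain_add_iff [Fintype ι] {φ : σ → ι} (hφ : Function.Surjective φ)
    (B : Set (ι → ℕ)) (F : Set ι) (d : σ →₀ ℕ) :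
    (∃ ν : σ →₀ ℕ, (∀ i ∈ φ ⁻¹' F, ν i = 0) ∧ ∃ b ∈ B, b ≤ ⇑((ν + d).mapDomain φ)) ↔
      ∃ b ∈ B, ∀ j ∈ F, b j ≤ d.mapDomain φ j := by
  classical
  constructor
  · rintro ⟨ν, hν, b, hb, hle⟩
    refine ⟨b, hb, fun j hj => ?_⟩
    have hνj : ν.mapDomain φ j = 0 := by
      rw [Finsupp.mapDomain_apply_eq_sum_filter]
      exact Finset.sum_eq_zero fun i hi =>
        hν i (by rw [Set.mem_preimage, (Finset.mem_filter.1 hi).2]; exact hj)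
    simpa [Finsupp.mapDomain_add, hνj] using hle j
  · rintro ⟨b, hb, hle⟩
    obtain ⟨g, hg⟩ := hφ.hasRightInverse
    let c : ι →₀ ℕ := Finsupp.equivFunOnFinite.symm fun j => if j ∈ F then 0 else b j
    refine ⟨c.mapDomain g, fun i hi => ?_, b, hb, fun j => ?_⟩
    · rw [Finsupp.mapDomain_apply_eq_sum_filter]
      refine Finset.sum_eq_zero fun j hj => ?_
      have : j ∈ F := by rw [← hg j, (Finset.mem_filter.1 hj).2]; exact hi
      simp [c, this]
    · rw [Finsupp.mapDomain_add, ← Finsupp.mapDomain_comp, hg.comp_eq_id, Finsupp.mapDomain_id]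
      by_cases hj : j ∈ F
      · simpa [c, hj] using hle j hj
      · simp [c, hj]

theorem mem_symbolicPower_monomialSubst_varIdeal_iff [IsDomain R] [IsNoetherianRing R]
    [Fintype ι] {φ : σ → ι} (hφ : Function.Surjective φ) (A : Set (ι → ℕ)) (k : ℕ)
    (f : MvPolynomial σ R) :
    f ∈ symbolicPower (Ideal.monomialSubst (fun j => varIdeal R (φ ⁻¹' {j})) A) k ↔
      ∀ d ∈ f.support, ∀ F, Minimal (IsVertexCover A) F →
        ∃ b ∈ k • A, ∀ j ∈ F, b j ≤ d.mapDomain φ j := by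
  have hprime (F : Set ι) : (⨆ j ∈ F, varIdeal R (φ ⁻¹' {j})).IsPrime :=
    by rw [iSup_varIdeal_preimage]; exact varIdeal_isPrime _
  have hP (j : ι) (F : Set ι) (h : varIdeal R (φ ⁻¹' {j}) ≤ ⨆ i ∈ F, varIdeal R (φ ⁻¹' {i})) :
      j ∈ F := by
    obtain ⟨i, rfl⟩ := hφ j
    rw [iSup_varIdeal_preimage] at h
    exact (X_mem_varIdeal_iff (R := R) (i := i)).1 (h ((X_mem_varIdeal_iff (R := R)).2 rfl))
  rw [mem_symbolicPower_iff, Ideal.minimalPrimes_monomialSubst hprime hP, Set.forall_mem_image,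
    Ideal.monomialSubst_pow, monomialSubst_varIdeal_eq]
  simp only [Set.mem_ofPred_eq, iSup_varIdeal_preimage, exists_mul_mem_restrictSupportIdeal_iff,
    exists_le_mapDomain_add_iff hφ]
  exact ⟨fun h d hd F hF => h hF d hd, fun h F hF d hd => h d hd F hF⟩

end MvPolynomial

theorem monIdeal_eq_monomialSubst (K : Type*) [Field K] {n : ℕ} (A : Set (Fin n → ℕ)) :
    monIdeal K A = Ideal.monomialSubst (fun j => varIdeal K (id ⁻¹' {j})) A := by
  simp only [Ideal.monomialSubst, varIdeal, Set.preimage_id, Set.image_singleton,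
    Ideal.span_singleton_pow, Ideal.prod_span_singleton]
  rw [monIdeal, Set.image_eq_iUnion]
  simp only [Ideal.span_iUnion]

theorem expIdeal_eq_monomialSubst (K : Type*) [Field K] {n : ℕ} (iv : Fin n → ℕ)
    (A : Set (Fin n → ℕ)) :
    expIdeal K iv A = Ideal.monomialSubst (fun j => varIdeal K (Sigma.fst ⁻¹' {j})) A := by
  have hfiber (j : Fin n) : (Set.range fun k : Fin (iv j) =>
      (X ⟨j, k⟩ : MvPolynomial ((j : Fin n) × Fin (iv j)) K)) = X '' (Sigma.fst ⁻¹' {j}) := by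
    ext; simp [eq_comm]
  simp only [expIdeal, hfiber]
  rfl

theorem expIdeal_symbolicPower_general (K : Type*) [Field K] {n : ℕ} (iv : Fin n → ℕ)
    (hiv : ∀ j, 0 < iv j) (A C : Set (Fin n → ℕ)) (k : ℕ)
    (hC : monIdeal K C = symbolicPower (monIdeal K A) k) :
    expIdeal K iv C = symbolicPower (expIdeal K iv A) k := by
  have hfst : Function.Surjective (Sigma.fst : (j : Fin n) × Fin (iv j) → Fin n) :=
    fun j => ⟨⟨j, ⟨0, hiv j⟩⟩, rfl⟩
  ext f
  rw [expIdeal_eq_monomialSubst, monomialSubst_varIdeal_eq, mem_restrictSupportIdeal_iff,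
    expIdeal_eq_monomialSubst, mem_symbolicPower_monomialSubst_varIdeal_iff hfst]
  refine forall₂_congr fun d _ => ?_
  have hd := congrArg (monomial (d.mapDomain Sigma.fst) (1 : K) ∈ ·) hC
  rw [monIdeal_eq_monomialSubst, monIdeal_eq_monomialSubst,
    mem_symbolicPower_monomialSubst_varIdeal_iff Function.surjective_id,
    monomialSubst_varIdeal_eq, mem_restrictSupportIdeal_iff] at hd
  simpa [support_monomial, Finsupp.mapDomain_id] using hd

/-- Corollary 1.4: `(I^{(k)})^* = (I^*)^{(k)}`: if the monomial ideal generated by the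
monomials `x^c`, `c ∈ C`, equals the `k`-th symbolic power of `I`, then its expansion is the
`k`-th symbolic power of `I^*`. -/
theorem expIdeal_symbolicPower (K : Type*) [Field K] {n : ℕ} (iv : Fin n → ℕ)
    (hiv : ∀ j, 0 < iv j) (A C : Set (Fin n → ℕ)) (k : ℕ) (hk : 1 ≤ k)
    (hC : monIdeal K C = symbolicPower (monIdeal K A) k) :
    expIdeal K iv C = symbolicPower (expIdeal K iv A) k :=
  expIdeal_symbolicPower_general K iv hiv A C k hC
end

section
/- Let $I \subseteq S$ be a monomial ideal. If $I$ has linear quotients (with respect to some ordering of its minimal monomial generators), then the expansion $I^*$ also has linear quotients. -/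
/-! The expansion `I^*` is generated by the monomials `x^c` whose block sums `(∑_k c_{jk})_j`
are exponents of the generators `u_1, …, u_m` of `I`. List these lifts by the index of the
generator they lift, and lifts of one generator lexicographically. Let `x^d`, a lift of `u_s`,
come before `x^c`, a lift of `u_t`.
If `s < t`, linear quotients of `I` give a variable `x_j` dividing `u_s / gcd(u_s, u_t)` with
`x_j u_t` a multiple of some `u_r`, `r < t`. Some variable `x_{jk}` of block `j` then divides
`x^d / gcd(x^d, x^c)`, and `x_{jk} x^c` is a multiple of a lift of `u_r`, which comes earlier.
If `s = t`, moving one unit of `c` from the first variable where `c` and `d` differ to a later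
variable of the same block gives a lexicographically smaller lift of `u_t`.
Either way the colon ideal of `x^c` is generated by variables. -/

open MvPolynomial

/-- A monomial ideal `J` has linear quotients: there is an ordering `u_1,…,u_m` of monomial
generators of `J` such that each colon ideal `(u_1,…,u_{l-1}) : u_l` is generated by
variables. -/
def HasLinearQuotients {K : Type*} [Field K] {σ : Type*}
    (J : Ideal (MvPolynomial σ K)) : Prop :=
  ∃ (m : ℕ) (u : Fin m → MvPolynomial σ K),
    (∀ l, ∃ a : σ →₀ ℕ, u l = monomial a 1) ∧
    J = Ideal.span (Set.range u) ∧
    ∀ l : Fin m, ∃ V : Set σ,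
      Submodule.colon (Ideal.span (u '' {l' | l' < l})) (Ideal.span {u l})
        = Ideal.span ((fun j => (X j : MvPolynomial σ K)) '' V)

open Finsupp

namespace LinearQuotients

section Fibres

variable {σ ι : Type*} (p : σ → ι)

theorem mapDomain_apply_eq_sum [Fintype σ] [DecidableEq ι] (c : σ →₀ ℕ) (j : ι) :
    c.mapDomain p j = ∑ v with p v = j, c v := by
  rw [mapDomain, Finsupp.sum_apply, sum_fintype _ _ (by simp), Finset.sum_filter]
  simp [single_apply]

theorem apply_le_mapDomain [Fintype σ] (c : σ →₀ ℕ) (v : σ) : c v ≤ c.mapDomain p (p v) := by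
  classical
  rw [mapDomain_apply_eq_sum]
  exact Finset.single_le_sum (f := c) (fun _ _ => Nat.zero_le _) (by simp)

theorem exists_lt_of_mapDomain_apply_lt [Fintype σ] {c d : σ →₀ ℕ} {j : ι}
    (h : c.mapDomain p j < d.mapDomain p j) : ∃ v, p v = j ∧ c v < d v := by
  classical
  simp only [mapDomain_apply_eq_sum] at h
  obtain ⟨v, hv, hlt⟩ := Finset.exists_lt_of_sum_lt h
  exact ⟨v, (Finset.mem_filter.mp hv).2, hlt⟩

theorem exists_le_mapDomain_eq {c : σ →₀ ℕ} {t : ι →₀ ℕ} (h : t ≤ c.mapDomain p) :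
    ∃ d ≤ c, d.mapDomain p = t := by
  classical
  induction c using Finsupp.induction generalizing t with
  | zero => exact ⟨0, le_rfl, by simpa [eq_comm] using h⟩
  | single_add v k c _ _ ih =>
    rw [mapDomain_add, mapDomain_single] at h
    obtain ⟨d, hdc, hd⟩ := ih (t := t - single (p v) k) (tsub_le_iff_left.mpr h)
    refine ⟨single v (min (t (p v)) k) + d, add_le_add (by simp) hdc, ?_⟩
    rw [mapDomain_add, mapDomain_single, hd]
    ext j
    rcases eq_or_ne (p v) j with rfl | hj
    · simp only [Finsupp.coe_add, coe_tsub, Pi.add_apply, Pi.sub_apply, single_eq_same]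
      omega
    · simp [hj]

theorem finite_setOf_mapDomain_eq [Finite σ] (a : ι →₀ ℕ) :
    {c : σ →₀ ℕ | c.mapDomain p = a}.Finite := by
  classical
  have := Fintype.ofFinite σ
  refine (Set.finite_Iic (equivFunOnFinite.symm fun v => a (p v))).subset fun c hc => ?_
  intro v
  simpa [← Set.mem_ofPred_eq.mp hc] using apply_le_mapDomain p c v

variable [LinearOrder σ]

theorem exists_exchange_of_mapDomain_eq [Fintype σ] {c d : σ →₀ ℕ}
    (hm : c.mapDomain p = d.mapDomain p) (hlt : toLex c < toLex d) :
    ∃ v, d v < c v ∧ ∃ d' : σ →₀ ℕ, d'.mapDomain p = d.mapDomain p ∧ toLex d' < toLex d ∧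
      d' ≤ d + single v 1 := by
  classical
  obtain ⟨v₀, hagree, hv₀⟩ := Finsupp.Lex.lt_iff.mp hlt
  replace hv₀ : c v₀ < d v₀ := hv₀
  obtain ⟨v₁, hv₁, hv₀₁, hdc⟩ : ∃ v₁, p v₁ = p v₀ ∧ v₀ < v₁ ∧ d v₁ < c v₁ := by
    by_contra! hle
    have : c.mapDomain p (p v₀) < d.mapDomain p (p v₀) := by
      simp only [mapDomain_apply_eq_sum]
      refine Finset.sum_lt_sum (fun v hv => ?_) ⟨v₀, by simp, hv₀⟩
      rcases lt_trichotomy v v₀ with h | rfl | h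
      · exact (hagree v h).le
      · exact hv₀.le
      · exact hle v (Finset.mem_filter.mp hv).2 h
    exact this.ne (by rw [hm])
  refine ⟨v₁, hdc, d - single v₀ 1 + single v₁ 1, ?_, ?_, ?_⟩
  · have : single v₀ 1 ≤ d := single_le_iff.mpr (by omega)
    rw [mapDomain_add, mapDomain_single, hv₁, ← mapDomain_single, ← mapDomain_add,
      tsub_add_cancel_of_le this]
  · refine Finsupp.Lex.lt_iff.mpr ⟨v₀, fun w hw => ?_, ?_⟩
    · simp [hw.ne', (hw.trans hv₀₁).ne']
    · simp [hv₀₁.ne]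
      omega
  · exact add_le_add tsub_le_self le_rfl

end Fibres

section MonomialIdeals

variable {σ R : Type*} [CommSemiring R]

theorem monomial_mem_of_le {J : Ideal (MvPolynomial σ R)} {c d : σ →₀ ℕ}
    (hd : monomial d (1 : R) ∈ J) (hdc : d ≤ c) : monomial c (1 : R) ∈ J := by
  rw [← tsub_add_cancel_of_le hdc, ← mul_one (1 : R), ← monomial_mul]
  exact J.mul_mem_left _ hd

variable [Nontrivial R]

theorem exists_le_of_monomial_mem_span {E : Set (σ →₀ ℕ)} {c : σ →₀ ℕ}
    (h : monomial c (1 : R) ∈ Ideal.span ((monomial · 1) '' E)) : ∃ d ∈ E, d ≤ c :=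
  mem_ideal_span_monomial_image.mp h c (by classical simp [coeff_monomial])

theorem exists_colon_eq_span_X_iff (E : Set (σ →₀ ℕ)) (c : σ →₀ ℕ) :
    (∃ V : Set σ, (Ideal.span ((monomial · (1 : R)) '' E)).colon (Ideal.span {monomial c (1 : R)})
        = Ideal.span (X '' V)) ↔
      ∀ d ∈ E, ∃ v, c v < d v ∧ ∃ d' ∈ E, d' ≤ c + single v 1 := by
  constructor
  · rintro ⟨V, hV⟩ d hd
    have hquot : monomial (d - c) (1 : R) ∈ Ideal.span (X '' V) := by
      rw [← hV, Ideal.mem_colon_span_singleton, monomial_mul, one_mul]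
      exact monomial_mem_of_le (Ideal.subset_span ⟨d, hd, rfl⟩) le_tsub_add
    obtain ⟨v, hvV, hv⟩ := mem_ideal_span_X_image.mp hquot (d - c)
      (by classical simp [coeff_monomial])
    have hXv : X v * monomial c (1 : R) ∈ Ideal.span ((monomial · 1) '' E) := by
      rw [← Ideal.mem_colon_span_singleton, hV]
      exact Ideal.subset_span ⟨v, hvV, rfl⟩
    rw [mul_comm, ← pow_one (X v), ← monomial_add_single] at hXv
    exact ⟨v, by simpa [Nat.sub_eq_zero_iff_le] using hv, exists_le_of_monomial_mem_span hXv⟩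
  · intro h
    refine ⟨{v | ∃ d' ∈ E, d' ≤ c + single v 1}, le_antisymm (fun f hf => ?_) ?_⟩
    · rw [Ideal.mem_colon_span_singleton] at hf
      refine mem_ideal_span_X_image.mpr fun e he => ?_
      obtain ⟨d, hd, hde⟩ := mem_ideal_span_monomial_image.mp hf (e + c)
        (by simpa [coeff_mul_monomial] using he)
      obtain ⟨v, hcv, hv⟩ := h d hd
      have := hde v
      simp only [Finsupp.coe_add, Pi.add_apply] at this
      exact ⟨v, hv, by omega⟩
    · rw [Ideal.span_le]
      rintro _ ⟨v, ⟨d', hd', hle⟩, rfl⟩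
      rw [SetLike.mem_coe, Ideal.mem_colon_span_singleton, mul_comm, ← pow_one (X v),
        ← monomial_add_single]
      exact monomial_mem_of_le (Ideal.subset_span ⟨d', hd', rfl⟩) hle

end MonomialIdeals

section Exchange

variable {σ : Type*}

/-- The combinatorial form of linear quotients of the monomials `x^{e s}`, `s ∈ F`, listed in
the order of `γ` (see `hasLinearQuotients_iff`). -/
def ExchangeOn {γ : Type*} [LT γ] (F : Set γ) (e : γ → σ →₀ ℕ) : Prop :=
  ∀ s ∈ F, ∀ t ∈ F, s < t → ∃ v, e t v < e s v ∧ ∃ r ∈ F, r < t ∧ e r ≤ e t + single v 1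

variable {K : Type*} [Field K]

theorem exists_colon_prefix_eq_span_X_iff {m : ℕ} (e : Fin m → σ →₀ ℕ) (t : Fin m) :
    (∃ V : Set σ, (Ideal.span ((fun l => monomial (e l) (1 : K)) '' {l | l < t})).colon
        (Ideal.span {monomial (e t) (1 : K)}) = Ideal.span (X '' V)) ↔
      ∀ s < t, ∃ v, e t v < e s v ∧ ∃ r < t, e r ≤ e t + single v 1 := by
  rw [← Set.image_image (monomial · (1 : K)) e, exists_colon_eq_span_X_iff]
  simp

theorem hasLinearQuotients_iff (J : Ideal (MvPolynomial σ K)) :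
    HasLinearQuotients J ↔ ∃ (m : ℕ) (e : Fin m → σ →₀ ℕ),
      J = Ideal.span (Set.range fun l => monomial (e l) 1) ∧ ExchangeOn Set.univ e := by
  constructor
  · rintro ⟨m, u, hmon, rfl, hcol⟩
    choose e he using hmon
    obtain rfl : u = fun l => monomial (e l) 1 := funext he
    exact ⟨m, e, rfl, fun s _ t _ hst => by
      simpa using (exists_colon_prefix_eq_span_X_iff e t).mp (hcol t) s hst⟩
  · rintro ⟨m, e, rfl, he⟩
    refine ⟨m, _, fun l => ⟨e l, rfl⟩, rfl, fun t => ?_⟩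
    exact (exists_colon_prefix_eq_span_X_iff e t).mpr fun s hst => by
      simpa using he s trivial t trivial hst

theorem hasLinearQuotients_of_exchangeOn {γ : Type*} [LinearOrder γ] {F : Set γ}
    (hF : F.Finite) {e : γ → σ →₀ ℕ} (h : ExchangeOn F e) :
    HasLinearQuotients (Ideal.span ((monomial · (1 : K)) '' (e '' F))) := by
  set f := hF.toFinset.orderEmbOfFin rfl
  have hrange : Set.range f = F := by simp [f]
  refine (hasLinearQuotients_iff _).mpr ⟨_, e ∘ f, ?_, ?_⟩
  · conv_lhs => rw [← hrange, ← Set.range_comp, ← Set.range_comp]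
    rfl
  · rintro s - t - hst
    obtain ⟨v, hv, r, hrF, hrt, hr⟩ := h (f s) (hrange.subset ⟨s, rfl⟩) (f t)
      (hrange.subset ⟨t, rfl⟩) (f.strictMono hst)
    obtain ⟨r, rfl⟩ := hrange.symm.subset hrF
    exact ⟨v, hv, r, trivial, f.lt_iff_lt.mp hrt, hr⟩

end Exchange

section Lifts

variable {σ ι : Type*} (p : σ → ι) {m : ℕ} (α : Fin m → ι →₀ ℕ)

def lifts : Set (Fin m ×ₗ Lex (σ →₀ ℕ)) :=
  {x | (ofLex (ofLex x).2).mapDomain p = α (ofLex x).1}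

theorem finite_lifts [Finite σ] : (lifts p α).Finite :=
  (Set.finite_iUnion fun l => (finite_setOf_mapDomain_eq p (α l)).image
    fun c => toLex (l, toLex c)).subset
    fun x hx => Set.mem_iUnion.mpr ⟨(ofLex x).1, ofLex (ofLex x).2, hx, rfl⟩

theorem image_lifts :
    (fun x => ofLex (ofLex x).2) '' lifts p α = {c | c.mapDomain p ∈ Set.range α} := by
  ext c
  constructor
  · rintro ⟨x, hx, rfl⟩
    exact ⟨(ofLex x).1, hx.symm⟩
  · rintro ⟨l, hl⟩
    exact ⟨toLex (l, toLex c), hl.symm, rfl⟩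

theorem exchangeOn_lifts [Fintype σ] [LinearOrder σ] (hα : ExchangeOn Set.univ α) :
    ExchangeOn (lifts p α) fun x => ofLex (ofLex x).2 := by
  rintro s hs t ht hst
  obtain ⟨ls, cs, rfl⟩ : ∃ l c, s = toLex (l, toLex c) := ⟨_, _, rfl⟩
  obtain ⟨lt, ct, rfl⟩ : ∃ l c, t = toLex (l, toLex c) := ⟨_, _, rfl⟩
  change cs.mapDomain p = α ls at hs
  change ct.mapDomain p = α lt at ht
  rcases Prod.Lex.toLex_lt_toLex.mp hst with hl | ⟨rfl, hc⟩
  · obtain ⟨j, hj, r, -, hr, hle⟩ := hα ls trivial lt trivial hl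
    rw [← hs, ← ht] at hj
    obtain ⟨v, rfl, hv⟩ := exists_lt_of_mapDomain_apply_lt p hj
    obtain ⟨d, hdle, hd⟩ := exists_le_mapDomain_eq p (t := α r) (c := ct + single v 1)
      (by rwa [mapDomain_add, mapDomain_single, ht])
    exact ⟨v, hv, toLex (r, toLex d), hd, Prod.Lex.toLex_lt_toLex.mpr (Or.inl hr), hdle⟩
  · obtain ⟨v, hv, d, hd, hdlt, hdle⟩ := exists_exchange_of_mapDomain_eq p (hs.trans ht.symm) hc
    exact ⟨v, hv, toLex (ls, toLex d), hd.trans ht,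
      Prod.Lex.toLex_lt_toLex.mpr (Or.inr ⟨rfl, hdlt⟩), hdle⟩

theorem hasLinearQuotients_span_mapDomain_mem_range [Fintype σ] [LinearOrder σ]
    (K : Type*) [Field K] (hα : ExchangeOn Set.univ α) :
    HasLinearQuotients (Ideal.span ((monomial · (1 : K)) ''
      {c : σ →₀ ℕ | c.mapDomain p ∈ Set.range α})) := by
  rw [← image_lifts]
  exact hasLinearQuotients_of_exchangeOn (finite_lifts p α) (exchangeOn_lifts p α hα)

end Lifts

section Expansion

variable {σ ι : Type*} (R : Type*) [CommSemiring R] (p : σ → ι)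

/-- The expansion along `p` of the monomial ideal `(x^b : b ∈ B)` of `R[ι]`: every `x_j` is
replaced by the ideal of the variables of the fibre `p ⁻¹' {j}` (see `prod_pow_span_X_fiber`). -/
noncomputable def expansion (B : Set (ι →₀ ℕ)) : Ideal (MvPolynomial σ R) :=
  Ideal.span ((monomial · 1) '' {c | ∃ b ∈ B, b ≤ c.mapDomain p})

theorem expansion_eq_span_mapDomain_mem (B : Set (ι →₀ ℕ)) :
    expansion R p B = Ideal.span ((monomial · 1) '' {c | c.mapDomain p ∈ B}) := by
  refine le_antisymm (Ideal.span_le.mpr ?_) (Ideal.span_mono (Set.image_mono ?_))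
  · rintro _ ⟨c, ⟨b, hb, hbc⟩, rfl⟩
    obtain ⟨d, hdc, rfl⟩ := exists_le_mapDomain_eq p hbc
    exact monomial_mem_of_le (Ideal.subset_span ⟨d, hb, rfl⟩) hdc
  · exact fun c hc => ⟨_, hc, le_rfl⟩

theorem expansion_le_of_span_le [Nontrivial R] {B B' : Set (ι →₀ ℕ)}
    (h : Ideal.span ((monomial · (1 : R)) '' B) ≤ Ideal.span ((monomial · 1) '' B')) :
    expansion R p B ≤ expansion R p B' := by
  refine Ideal.span_le.mpr ?_
  rintro _ ⟨c, ⟨b, hb, hbc⟩, rfl⟩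
  obtain ⟨b', hb', hb'b⟩ := exists_le_of_monomial_mem_span (h (Ideal.subset_span ⟨b, hb, rfl⟩))
  exact Ideal.subset_span ⟨c, ⟨b', hb', hb'b.trans hbc⟩, rfl⟩

theorem expansion_eq_of_span_eq [Nontrivial R] {B B' : Set (ι →₀ ℕ)}
    (h : Ideal.span ((monomial · (1 : R)) '' B) = Ideal.span ((monomial · 1) '' B')) :
    expansion R p B = expansion R p B' :=
  le_antisymm (expansion_le_of_span_le R p h.le) (expansion_le_of_span_le R p h.ge)

theorem expansion_eq_iSup (B : Set (ι →₀ ℕ)) :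
    expansion R p B = ⨆ b ∈ B, expansion R p {b} := by
  simp only [expansion, Ideal.span, ← Submodule.span_iUnion₂, ← Set.image_iUnion₂]
  congr 2
  ext
  simp

theorem expansion_zero : expansion R p {0} = ⊤ :=
  (Ideal.eq_top_iff_one _).mpr (Ideal.subset_span ⟨0, ⟨0, rfl, le_rfl⟩, by simp⟩)

theorem expansion_mul_le (a b : ι →₀ ℕ) :
    expansion R p {a} * expansion R p {b} ≤ expansion R p {a + b} := by
  rw [expansion, expansion, Ideal.span_mul_span', Ideal.span_le, Set.mul_subset_iff]
  rintro _ ⟨c, ⟨_, rfl, hc⟩, rfl⟩ _ ⟨d, ⟨_, rfl, hd⟩, rfl⟩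
  rw [monomial_mul, one_mul]
  exact Ideal.subset_span ⟨c + d, ⟨_, rfl, by rw [mapDomain_add]; exact add_le_add hc hd⟩, rfl⟩

theorem span_X_fiber_le (j : ι) :
    Ideal.span (X '' {v | p v = j}) ≤ expansion R p {single j 1} := by
  rw [Ideal.span_le]
  rintro _ ⟨v, rfl, rfl⟩
  exact Ideal.subset_span ⟨single v 1, ⟨_, rfl, by rw [mapDomain_single]⟩, rfl⟩

theorem prod_le_expansion {κ : Type*} (s : Finset κ) (I : κ → Ideal (MvPolynomial σ R))
    (b : κ → ι →₀ ℕ) (h : ∀ i ∈ s, I i ≤ expansion R p {b i}) :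
    ∏ i ∈ s, I i ≤ expansion R p {∑ i ∈ s, b i} := by
  classical
  induction s using Finset.induction_on with
  | empty => simp [expansion_zero]
  | insert i s hi ih =>
    rw [Finset.prod_insert hi, Finset.sum_insert hi]
    exact (Ideal.mul_mono (h i (s.mem_insert_self i))
      (ih fun j hj => h j (Finset.mem_insert_of_mem hj))).trans (expansion_mul_le R p _ _)

theorem prod_pow_span_X_fiber [Fintype σ] [Fintype ι] [DecidableEq ι] (b : ι →₀ ℕ) :
    ∏ j, Ideal.span (X '' {v | p v = j}) ^ b j = expansion R p {b} := by
  refine le_antisymm ?_ (Ideal.span_le.mpr ?_)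
  · calc ∏ j, Ideal.span (X '' {v | p v = j}) ^ b j
          = ∏ j, ∏ _k ∈ Finset.range (b j), Ideal.span (X '' {v | p v = j}) := by simp
      _ ≤ expansion R p {∑ j, ∑ _k ∈ Finset.range (b j), single j 1} :=
          prod_le_expansion R p _ _ _ fun j _ =>
            prod_le_expansion R p _ _ _ fun _ _ => span_X_fiber_le R p j
      _ = expansion R p {b} := by simp
  · rintro _ ⟨c, ⟨_, rfl, hbc⟩, rfl⟩
    obtain ⟨d, hdc, rfl⟩ := exists_le_mapDomain_eq p hbc
    refine monomial_mem_of_le ?_ hdc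
    rw [monomial_eq, C_1, one_mul, prod_fintype _ _ (by simp), ← Finset.prod_fiberwise _ p]
    refine Ideal.prod_mem_prod fun j _ => ?_
    rw [mapDomain_apply_eq_sum, ← Finset.prod_pow_eq_pow_sum]
    refine Ideal.prod_mem_prod fun v hv => Ideal.pow_mem_pow (Ideal.subset_span ?_) _
    exact ⟨v, (Finset.mem_filter.mp hv).2, rfl⟩

end Expansion

theorem monIdeal_eq_span (K : Type*) [Field K] {n : ℕ} (A : Set (Fin n → ℕ)) :
    monIdeal K A = Ideal.span ((monomial · 1) '' (equivFunOnFinite.symm '' A)) := by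
  rw [monIdeal, Set.image_image]
  congr! with a
  rw [monomial_eq, C_1, one_mul, prod_fintype _ _ (by simp)]
  simp

theorem expIdeal_eq_expansion (K : Type*) [Field K] {n : ℕ} (iv : Fin n → ℕ) (A : Set (Fin n → ℕ)) :
    expIdeal K iv A = expansion K Sigma.fst (equivFunOnFinite.symm '' A) := by
  have hP : ∀ j, Set.range (fun k : Fin (iv j) =>
      (X ⟨j, k⟩ : MvPolynomial ((j : Fin n) × Fin (iv j)) K)) = X '' {v | v.1 = j} := by
    intro j
    ext
    constructor
    · rintro ⟨k, rfl⟩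
      exact ⟨⟨j, k⟩, rfl, rfl⟩
    · rintro ⟨⟨_, k⟩, rfl, rfl⟩
      exact ⟨k, rfl⟩
  rw [expansion_eq_iSup, iSup_image, expIdeal]
  simp_rw [hP, ← prod_pow_span_X_fiber, coe_equivFunOnFinite_symm]

end LinearQuotients

theorem expIdeal_hasLinearQuotients_general (K : Type*) [Field K] {n : ℕ} (iv : Fin n → ℕ)
    (A : Set (Fin n → ℕ))
    (h : HasLinearQuotients (monIdeal K A)) :
    HasLinearQuotients (expIdeal K iv A) := by
  obtain ⟨m, α, hspan, hα⟩ := (LinearQuotients.hasLinearQuotients_iff _).mp h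
  rw [LinearQuotients.monIdeal_eq_span, Set.range_comp' (monomial · (1 : K)) α] at hspan
  -- any linear order on the variables will do
  let : LinearOrder ((j : Fin n) × Fin (iv j)) :=
    LinearOrder.lift' _ (Fintype.equivFin _).injective
  rw [LinearQuotients.expIdeal_eq_expansion, LinearQuotients.expansion_eq_of_span_eq K _ hspan,
    LinearQuotients.expansion_eq_span_mapDomain_mem]
  exact LinearQuotients.hasLinearQuotients_span_mapDomain_mem_range Sigma.fst α K hα

/-- Proposition 1.5: if `I` has linear quotients, then so does its expansion `I^*`. -/
theorem expIdeal_hasLinearQuotients (K : Type*) [Field K] {n : ℕ} (iv : Fin n → ℕ)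
    (hiv : ∀ j, 0 < iv j) (A : Set (Fin n → ℕ))
    (h : HasLinearQuotients (monIdeal K A)) :
    HasLinearQuotients (expIdeal K iv A) :=
  expIdeal_hasLinearQuotients_general K iv A h
end

section
/- Let $P$ be a monomial prime ideal, and for each $a$ let $g_a$ denote the decomposition function of $P^a$ (with generators ordered lexicographically). If $u$ is a minimal monomial generator of $P^a$ and $a \ge b$, then $g_b(g_a(x_t u)) = g_b(x_t g_b(u))$ for every variable $x_t$. -/
/-!
For a variable `x_j ∈ P` let `S(v)` be the total exponent in `v` of the variables of `P` that
precede `x_j`. The exponent of `g_c(v)` at `x_j` is `min (v_j) (c - S(v))`, and an induction along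
the order of the variables gives `S(g_c(v)) = min (S(v)) c`. Both sides of the identity thereby
become explicit expressions in `w_j`, `S(w)` and the contribution of `x_t`; as `w_j + S(w) ≤ a`,
`x_t` contributes at most `1`, and `b ≤ a`, they agree by linear arithmetic.
-/
/-- The decomposition function `g_a` of the power `P^a` of the monomial prime ideal
`P = (x_j : j ∈ V)`, described on exponent vectors: writing the monomial `u = x^w` as
`u = v·x_{j_1}⋯x_{j_d}` with `v ∉ P`, all `x_{j_k} ∈ P` and `j_1 ≤ ⋯ ≤ j_d`, the value
`g_a(u) = x_{j_1}⋯x_{j_a}` is the product of the first `a` of these variables; the result is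
again given as an exponent vector. -/
def gdec {n : ℕ} (V : Finset (Fin n)) (a : ℕ) (w : Fin n → ℕ) : Fin n → ℕ :=
  fun j => if j ∈ V then
    min (w j) (a - ∑ t ∈ Finset.univ.filter (fun t => t < j ∧ t ∈ V), w t)
  else 0

open Finset

section

variable {n : ℕ} (V : Finset (Fin n))

lemma gdec_apply_of_mem {c : ℕ} {w : Fin n → ℕ} {j : Fin n} (hj : j ∈ V) :
    gdec V c w j = min (w j) (c - ∑ t ∈ V.filter (· < j), w t) := by
  rw [gdec, if_pos hj]
  congr 3
  ext t
  simp [and_comm]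

lemma gdec_apply_of_notMem {c : ℕ} {w : Fin n → ℕ} {j : Fin n} (hj : j ∉ V) :
    gdec V c w j = 0 := by
  simp [gdec, hj]

lemma gdec_sum_of_lowerClosed (c : ℕ) (w : Fin n → ℕ) {s : Finset (Fin n)} (hsV : s ⊆ V)
    (hs : ∀ x ∈ s, V.filter (· < x) ⊆ s) :
    ∑ t ∈ s, gdec V c w t = min (∑ t ∈ s, w t) c := by
  induction s using Finset.induction_on_max with
  | empty => simp
  | insert m s hlt ih =>
    have hm : m ∉ s := fun h => lt_irrefl m (hlt m h)
    have hbelow : V.filter (· < m) = s := by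
      ext x
      simp only [mem_filter]
      constructor
      · rintro ⟨hxV, hxm⟩
        have := hs m (mem_insert_self m s) (mem_filter.mpr ⟨hxV, hxm⟩)
        exact (mem_insert.mp this).resolve_left hxm.ne
      · intro hx
        exact ⟨hsV (mem_insert_of_mem hx), hlt x hx⟩
    have ih' : ∑ t ∈ s, gdec V c w t = min (∑ t ∈ s, w t) c := by
      refine ih ((subset_insert m s).trans hsV) fun x hx y hy => ?_
      have hyx := (mem_filter.mp hy).2
      exact (mem_insert.mp (hs x (mem_insert_of_mem hx) hy)).resolve_left
        (hyx.trans (hlt x hx)).ne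
    rw [sum_insert hm, sum_insert hm, ih', gdec_apply_of_mem V (hsV (mem_insert_self m s)), hbelow]
    omega

lemma gdec_sum_filter_lt (c : ℕ) (w : Fin n → ℕ) (j : Fin n) :
    ∑ t ∈ V.filter (· < j), gdec V c w t = min (∑ t ∈ V.filter (· < j), w t) c :=
  gdec_sum_of_lowerClosed V c w (filter_subset _ V) fun _ hx _ hy =>
    mem_filter.mpr ⟨(mem_filter.mp hy).1, (mem_filter.mp hy).2.trans (mem_filter.mp hx).2⟩

end

lemma add_sum_le_sum_univ_of_notMem {ι : Type*} [Fintype ι] [DecidableEq ι] (v : ι → ℕ)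
    {s : Finset ι} {j : ι} (hj : j ∉ s) : v j + ∑ t ∈ s, v t ≤ ∑ t, v t := by
  rw [← sum_insert hj]
  exact sum_le_univ_sum_of_nonneg fun _ => Nat.zero_le _

theorem gdec_comm_general {n : ℕ} (V : Finset (Fin n)) (a b : ℕ) (hab : b ≤ a)
    (w : Fin n → ℕ) (hdeg : ∑ j, w j = a) (t : Fin n) :
    gdec V b (gdec V a (w + Pi.single t 1)) = gdec V b (gdec V b w + Pi.single t 1) := by
  funext j
  by_cases hj : j ∈ V
  swap
  · simp only [gdec_apply_of_notMem V hj]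
  have hj' : j ∉ V.filter (· < j) := by simp
  have hw := add_sum_le_sum_univ_of_notMem w hj'
  have hsingle := add_sum_le_sum_univ_of_notMem (Pi.single t 1) hj'
  rw [sum_pi_single'] at hsingle
  simp only [gdec_apply_of_mem V hj, gdec_sum_filter_lt, Pi.add_apply, sum_add_distrib]
  omega

/-- Lemma 3.1: if `u = x^w` is a minimal monomial generator of `P^a` and `a ≥ b`, then
`g_b(g_a(x_t u)) = g_b(x_t g_b(u))` for every variable `x_t`. -/
theorem gdec_comm {n : ℕ} (V : Finset (Fin n)) (a b : ℕ) (hab : b ≤ a)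
    (w : Fin n → ℕ) (hsupp : ∀ j, w j ≠ 0 → j ∈ V) (hdeg : ∑ j, w j = a) (t : Fin n) :
    gdec V b (gdec V a (w + Pi.single t 1)) = gdec V b (gdec V b w + Pi.single t 1) :=
  gdec_comm_general V a b hab w hdeg t
end

section
/- Let $P$ be a monomial prime ideal and $a \ge b \ge c$ nonnegative integers. Writing $g_b, g_c$ for the decomposition functions of $P^b, P^c$ and $c_b(u) = u/g_b(u)$, $c_c(u) = u/g_c(u)$ for the complementary factors, one has for every minimal generator $u$ of $P^a$: $g_c(g_b(u)) = g_c(u)$ and $c_b(u)\, c_c(g_b(u)) = c_c(u)$. -/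
/-!
Ordering the variables of `P` by index, `g_b(u)` keeps the first `b` of them, so the partial
degree of `g_b(u)` in the variables before `x_j` is that of `u`, capped at `b`. Capping at `b`
and then at `c ≤ b` is the same as capping at `c`, which gives `g_c ∘ g_b = g_c`; the second
identity is then telescoping of `u / g_b(u)` and `g_b(u) / g_c(u)`.
-/

open Finset

lemma sum_min_sub_sum_filter_lt {α : Type*} [LinearOrder α] (s : Finset α) (f : α → ℕ)
    (b : ℕ) :
    ∑ t ∈ s, min (f t) (b - ∑ u ∈ s with u < t, f u) = min (∑ t ∈ s, f t) b := by
  induction s using Finset.induction_on_max with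
  | empty => simp
  | insert a s hlt ih =>
    have ha : a ∉ s := fun h => lt_irrefl a (hlt a h)
    have below_a : ∑ u ∈ insert a s with u < a, f u = ∑ u ∈ s, f u := by
      rw [filter_insert, if_neg (lt_irrefl a), filter_true_of_mem hlt]
    have rest : ∑ t ∈ s, min (f t) (b - ∑ u ∈ insert a s with u < t, f u)
        = ∑ t ∈ s, min (f t) (b - ∑ u ∈ s with u < t, f u) :=
      sum_congr rfl fun t ht => by rw [filter_insert, if_neg (hlt t ht).not_gt]
    rw [sum_insert ha, sum_insert ha, below_a, rest, ih]
    -- `min x (b - S) + min S b = min (S + x) b`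
    omega

variable {n : ℕ} (V : Finset (Fin n))

lemma gdec_apply (a : ℕ) (w : Fin n → ℕ) (j : Fin n) :
    gdec V a w j = if j ∈ V then min (w j) (a - ∑ t ∈ V with t < j, w t) else 0 := by
  have hfilter : univ.filter (fun t => t < j ∧ t ∈ V) = V.filter (· < j) := by
    ext t; simp [and_comm]
  rw [gdec, hfilter]

lemma gdec_le (a : ℕ) (w : Fin n → ℕ) : gdec V a w ≤ w := fun j => by
  rw [gdec_apply]
  split_ifs
  exacts [min_le_left _ _, Nat.zero_le _]

lemma sum_gdec_filter_lt (b : ℕ) (w : Fin n → ℕ) (j : Fin n) :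
    ∑ t ∈ V with t < j, gdec V b w t = min (∑ t ∈ V with t < j, w t) b := by
  rw [← sum_min_sub_sum_filter_lt]
  refine sum_congr rfl fun t ht => ?_
  obtain ⟨htV, htj⟩ := mem_filter.mp ht
  rw [gdec_apply, if_pos htV, filter_filter]
  congr 3
  exact filter_congr fun u _ => ⟨fun hut => ⟨hut.trans htj, hut⟩, And.right⟩

lemma gdec_gdec_of_le {b c : ℕ} (hcb : c ≤ b) (w : Fin n → ℕ) :
    gdec V c (gdec V b w) = gdec V c w := by
  funext j
  rw [gdec_apply, gdec_apply V c w, gdec_apply V b w, sum_gdec_filter_lt]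
  split_ifs
  · omega
  · rfl

theorem gdec_trans_general {n : ℕ} (V : Finset (Fin n)) (b c : ℕ) (hbc : c ≤ b)
    (w : Fin n → ℕ) :
    gdec V c (gdec V b w) = gdec V c w ∧
    (w - gdec V b w) + (gdec V b w - gdec V c (gdec V b w)) = w - gdec V c w := by
  have hcomp := gdec_gdec_of_le V hbc w
  refine ⟨hcomp, ?_⟩
  rw [tsub_add_tsub_cancel (gdec_le V b w) (gdec_le V c _), hcomp]

/-- Proposition 3.3 (key identities): for `a ≥ b ≥ c` and `u = x^w` a minimal monomial
generator of `P^a`, one has `g_c(g_b(u)) = g_c(u)` and, with the complementary factors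
`c_b(u) = u/g_b(u)` (on exponent vectors: `w - gdec V b w`),
`c_b(u)·c_c(g_b(u)) = c_c(u)`. -/
theorem gdec_trans {n : ℕ} (V : Finset (Fin n)) (a b c : ℕ) (hab : b ≤ a) (hbc : c ≤ b)
    (w : Fin n → ℕ) (hsupp : ∀ j, w j ≠ 0 → j ∈ V) (hdeg : ∑ j, w j = a) :
    gdec V c (gdec V b w) = gdec V c w ∧
    (w - gdec V b w) + (gdec V b w - gdec V c (gdec V b w)) = w - gdec V c w :=
  gdec_trans_general V b c hbc w
end
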